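/- arXiv:2107.11507 — 2 statements merged into one kernel-verified Lean document; each statement's English description precedes it below -/
import Mathlib

section
/- Let A be a unital complex algebra with a Sylvester rank function rk, and let Q(x) be a linear matrix of size m over ℂ⟨x₁,…,x_d⟩, u a complex row vector and v a complex column vector. Let X, Y be d-tuples in A such that Q(X) and Q(Y) are invertible in Mₘ(A). Then rk(u Q(X)⁻¹ v − u Q(Y)⁻¹ v) ≤ m·(rk(X₁−Y₁) + … + rk(X_d−Y_d)). -/
/-!
Since `Q(X) Q(X)⁻¹ = 1 = Q(Y)⁻¹ Q(Y)`, one has `Q(X)⁻¹ − Q(Y)⁻¹ = Q(Y)⁻¹ (Q(Y) − Q(X)) Q(X)⁻¹`,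
so the rank of `u Q(X)⁻¹ v − u Q(Y)⁻¹ v` is at most `rk (Q(Y) − Q(X))`. The constant term
cancels in `Q(Y) − Q(X) = Σᵢ Qᵢ ⊗ (Yᵢ − Xᵢ)`, and `Qᵢ ⊗ z` is the complex matrix `Qᵢ` times the
diagonal matrix `z ⊗ 1ₘ`, which is a sum of `m` matrices of rank at most `rk z`; subadditivity
of `rk` then gives the bound.
-/

/-- A Sylvester rank function on a unital algebra `A`: a nonnegative real-valued
function on rectangular matrices over `A` satisfying `rk 0 = 0`, `rk 1 = 1`,
`rk (A*B) ≤ min (rk A) (rk B)`, additivity on block-diagonal matrices and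
superadditivity on block upper-triangular matrices. -/
structure SylvesterRank (A : Type*) [Ring A] where
  rk : ∀ {m n : ℕ}, Matrix (Fin m) (Fin n) A → ℝ
  rk_nonneg : ∀ {m n : ℕ} (M : Matrix (Fin m) (Fin n) A), 0 ≤ rk M
  rk_zero : ∀ {m n : ℕ}, rk (0 : Matrix (Fin m) (Fin n) A) = 0
  rk_one : rk (1 : Matrix (Fin 1) (Fin 1) A) = 1
  rk_mul_le_left : ∀ {m n p : ℕ} (M : Matrix (Fin m) (Fin n) A)
    (N : Matrix (Fin n) (Fin p) A), rk (M * N) ≤ rk M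
  rk_mul_le_right : ∀ {m n p : ℕ} (M : Matrix (Fin m) (Fin n) A)
    (N : Matrix (Fin n) (Fin p) A), rk (M * N) ≤ rk N
  rk_blockDiag : ∀ {m n p q : ℕ} (M : Matrix (Fin m) (Fin n) A)
    (N : Matrix (Fin p) (Fin q) A),
    rk ((Matrix.fromBlocks M 0 0 N).submatrix finSumFinEquiv.symm finSumFinEquiv.symm)
      = rk M + rk N
  rk_blockTriangle : ∀ {m n p q : ℕ} (M : Matrix (Fin m) (Fin n) A)
    (C : Matrix (Fin m) (Fin q) A) (N : Matrix (Fin p) (Fin q) A),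
    rk M + rk N ≤
      rk ((Matrix.fromBlocks M C 0 N).submatrix finSumFinEquiv.symm finSumFinEquiv.symm)

/-- The rank of a single element of `A`, viewed as a `1 × 1` matrix. -/
noncomputable def SylvesterRank.rkElem {A : Type*} [Ring A] (S : SylvesterRank A)
    (x : A) : ℝ :=
  S.rk !![x]

/-- Evaluation of the linear matrix `Q₀ ⊗ 1 + Σᵢ Qᵢ ⊗ xᵢ` (with `Q₀,…,Q_d ∈ Mₘ(ℂ)`)
at a tuple `X` over a unital complex algebra `A`. -/
noncomputable def linMatEval {A : Type*} [Ring A] [Algebra ℂ A] {m d : ℕ}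
    (Q0 : Matrix (Fin m) (Fin m) ℂ) (Qc : Fin d → Matrix (Fin m) (Fin m) ℂ)
    (X : Fin d → A) : Matrix (Fin m) (Fin m) A :=
  Q0.map (algebraMap ℂ A) + ∑ i, Matrix.of fun r c => Qc i r c • X i

namespace SylvesterRank

variable {A : Type*} [Ring A] (S : SylvesterRank A)

lemma rk_mul_mul_le {m n p q : ℕ} (L : Matrix (Fin m) (Fin n) A) (M : Matrix (Fin n) (Fin p) A)
    (N : Matrix (Fin p) (Fin q) A) : S.rk (L * M * N) ≤ S.rk M :=
  (S.rk_mul_le_left _ _).trans (S.rk_mul_le_right _ _)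

lemma rk_neg {m n : ℕ} (M : Matrix (Fin m) (Fin n) A) : S.rk (-M) = S.rk M := by
  have neg_le : ∀ N : Matrix (Fin m) (Fin n) A, S.rk (-N) ≤ S.rk N := fun N => by
    simpa using S.rk_mul_le_right (-1 : Matrix (Fin m) (Fin m) A) N
  exact le_antisymm (neg_le M) (by simpa using neg_le (-M))

lemma rkElem_sub_comm (x y : A) : S.rkElem (x - y) = S.rkElem (y - x) := by
  rw [rkElem, rkElem, ← S.rk_neg]
  congr 1
  ext i j
  fin_cases i; fin_cases j
  simp

lemma rk_add_le {m n : ℕ} (M N : Matrix (Fin m) (Fin n) A) :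
    S.rk (M + N) ≤ S.rk M + S.rk N := by
  have : M + N =
      (Matrix.fromCols (1 : Matrix (Fin m) (Fin m) A) 1).submatrix id
        (finSumFinEquiv (m := m) (n := m)).symm *
      (Matrix.fromBlocks M 0 0 N).submatrix (finSumFinEquiv (m := m) (n := m)).symm
        (finSumFinEquiv (m := n) (n := n)).symm *
      (Matrix.fromRows (1 : Matrix (Fin n) (Fin n) A) 1).submatrix
        (finSumFinEquiv (m := n) (n := n)).symm id := by
    rw [Matrix.submatrix_mul_equiv, Matrix.submatrix_mul_equiv]
    simp [Matrix.fromCols_mul_fromBlocks, Matrix.fromCols_mul_fromRows]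
  rw [this, ← S.rk_blockDiag]
  exact S.rk_mul_mul_le _ _ _

lemma rk_sum_le {m n : ℕ} {ι : Type*} (s : Finset ι) (f : ι → Matrix (Fin m) (Fin n) A) :
    S.rk (∑ i ∈ s, f i) ≤ ∑ i ∈ s, S.rk (f i) := by
  classical
  induction s using Finset.induction_on with
  | empty => simp [S.rk_zero]
  | insert i s hi ih =>
    rw [Finset.sum_insert hi, Finset.sum_insert hi]
    exact (S.rk_add_le _ _).trans (by gcongr)

lemma rk_single_le {m n : ℕ} (i : Fin m) (j : Fin n) (x : A) :
    S.rk (Matrix.single i j x) ≤ S.rkElem x := by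
  have : Matrix.single i j x =
      Matrix.single i (0 : Fin 1) (1 : A) * !![x] * Matrix.single (0 : Fin 1) j (1 : A) := by
    have hx : !![x] = Matrix.single 0 0 x := by
      ext a b; fin_cases a; fin_cases b; simp
    rw [hx, Matrix.single_mul_single_same, Matrix.single_mul_single_same, one_mul, mul_one]
  rw [this]
  exact S.rk_mul_mul_le _ _ _

lemma rk_diagonal_le {m : ℕ} (f : Fin m → A) :
    S.rk (Matrix.diagonal f) ≤ ∑ i, S.rkElem (f i) := by
  rw [← Matrix.sum_single_eq_diagonal]
  exact (S.rk_sum_le _ _).trans (Finset.sum_le_sum fun i _ => S.rk_single_le i i (f i))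

lemma rk_of_smul_le [Algebra ℂ A] {m n : ℕ} (Q : Matrix (Fin m) (Fin n) ℂ) (x : A) :
    S.rk (Matrix.of fun r c => Q r c • x) ≤ n * S.rkElem x := by
  have : (Matrix.of fun r c => Q r c • x) =
      Q.map (algebraMap ℂ A) * Matrix.diagonal (fun _ : Fin n => x) := by
    ext r c
    simp [Algebra.smul_def]
  rw [this]
  refine (S.rk_mul_le_right _ _).trans ((S.rk_diagonal_le _).trans ?_)
  simp

end SylvesterRank

lemma linMatEval_sub {A : Type*} [Ring A] [Algebra ℂ A] {m d : ℕ}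
    (Q0 : Matrix (Fin m) (Fin m) ℂ) (Qc : Fin d → Matrix (Fin m) (Fin m) ℂ) (X Y : Fin d → A) :
    linMatEval Q0 Qc X - linMatEval Q0 Qc Y =
      ∑ i, Matrix.of fun r c => Qc i r c • (X i - Y i) := by
  simp only [linMatEval, add_sub_add_left_eq_sub, ← Finset.sum_sub_distrib, smul_sub]
  rfl

lemma SylvesterRank.rk_linMatEval_sub_le {A : Type*} [Ring A] [Algebra ℂ A]
    (S : SylvesterRank A) {m d : ℕ} (Q0 : Matrix (Fin m) (Fin m) ℂ)
    (Qc : Fin d → Matrix (Fin m) (Fin m) ℂ) (X Y : Fin d → A) :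
    S.rk (linMatEval Q0 Qc X - linMatEval Q0 Qc Y) ≤ m * ∑ i, S.rkElem (X i - Y i) := by
  rw [linMatEval_sub, Finset.mul_sum]
  exact (S.rk_sum_le _ _).trans (Finset.sum_le_sum fun i _ => S.rk_of_smul_le (Qc i) _)

theorem sylvesterRank_resolvent_diff_general {A : Type*} [Ring A] [Algebra ℂ A]
    (S : SylvesterRank A) {m d : ℕ}
    (Q0 : Matrix (Fin m) (Fin m) ℂ) (Qc : Fin d → Matrix (Fin m) (Fin m) ℂ)
    (u : Matrix (Fin 1) (Fin m) ℂ) (v : Matrix (Fin m) (Fin 1) ℂ)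
    (X Y : Fin d → A) (QXi QYi : Matrix (Fin m) (Fin m) A)
    (hX1 : linMatEval Q0 Qc X * QXi = 1)
    (hY2 : QYi * linMatEval Q0 Qc Y = 1) :
    S.rk (u.map (algebraMap ℂ A) * QXi * v.map (algebraMap ℂ A)
        - u.map (algebraMap ℂ A) * QYi * v.map (algebraMap ℂ A))
      ≤ m * ∑ i, S.rkElem (X i - Y i) := by
  set QX := linMatEval Q0 Qc X
  set QY := linMatEval Q0 Qc Y
  have resolvent : QXi - QYi = QYi * (QY - QX) * QXi := by
    rw [mul_sub, sub_mul, mul_assoc QYi QX QXi, hX1, hY2, one_mul, mul_one]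
  calc _ = S.rk (u.map (algebraMap ℂ A) * QYi * (QY - QX) * (QXi * v.map (algebraMap ℂ A))) := by
        rw [← Matrix.sub_mul, ← Matrix.mul_sub, resolvent]
        simp only [Matrix.mul_assoc]
    _ ≤ S.rk (QY - QX) := S.rk_mul_mul_le _ _ _
    _ ≤ m * ∑ i, S.rkElem (Y i - X i) := S.rk_linMatEval_sub_le Q0 Qc Y X
    _ = m * ∑ i, S.rkElem (X i - Y i) := by simp only [S.rkElem_sub_comm]

/-- For a linear matrix `Q(x)` of size `m` over `ℂ⟨x₁,…,x_d⟩`, a complex row `u` and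
column `v`, and tuples `X`, `Y` over a unital complex algebra `A` with a Sylvester
rank function `rk` such that `Q(X)` and `Q(Y)` are invertible (with two-sided
inverses `QXi`, `QYi`), one has
`rk (u Q(X)⁻¹ v − u Q(Y)⁻¹ v) ≤ m · (rk (X₁ − Y₁) + ⋯ + rk (X_d − Y_d))`. -/
theorem sylvesterRank_resolvent_diff {A : Type*} [Ring A] [Algebra ℂ A]
    (S : SylvesterRank A) {m d : ℕ}
    (Q0 : Matrix (Fin m) (Fin m) ℂ) (Qc : Fin d → Matrix (Fin m) (Fin m) ℂ)
    (u : Matrix (Fin 1) (Fin m) ℂ) (v : Matrix (Fin m) (Fin 1) ℂ)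
    (X Y : Fin d → A) (QXi QYi : Matrix (Fin m) (Fin m) A)
    (hX1 : linMatEval Q0 Qc X * QXi = 1) (hX2 : QXi * linMatEval Q0 Qc X = 1)
    (hY1 : linMatEval Q0 Qc Y * QYi = 1) (hY2 : QYi * linMatEval Q0 Qc Y = 1) :
    S.rk (u.map (algebraMap ℂ A) * QXi * v.map (algebraMap ℂ A)
        - u.map (algebraMap ℂ A) * QYi * v.map (algebraMap ℂ A))
      ≤ m * ∑ i, S.rkElem (X i - Y i) :=
  sylvesterRank_resolvent_diff_general S Q0 Qc u v X Y QXi QYi hX1 hY2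
end

section
/- Let n ≥ 1 and let λ₁,…,λₙ and ρ₁,…,ρₙ be complex numbers, and a ∈ ℂ. Let P : ℂ × ℂ → ℂ be a function with the injectivity property at a: whenever P(λ,ρ) = a, then P(λ,ρ') ≠ a for all ρ' ≠ ρ and P(λ',ρ) ≠ a for all λ' ≠ λ. Suppose that for all λ, ρ with P(λ,ρ) = a, #{i : λ_i = λ} + #{j : ρ_j = ρ} ≤ n. Then there exists a permutation σ of {1,…,n} such that P(λ_i, ρ_{σ(i)}) ≠ a for all i. -/
/-- Combinatorial reordering claim: let `λ₁,…,λₙ`, `ρ₁,…,ρₙ` be complex numbers,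
`a ∈ ℂ`, and `P : ℂ × ℂ → ℂ` injective at `a` in each variable separately on the
fibre `P = a`. If for all `λ, ρ` with `P(λ,ρ) = a` the multiplicity of `λ` among
the `λᵢ` plus the multiplicity of `ρ` among the `ρⱼ` is at most `n`, then there is
a permutation `σ` of `{1,…,n}` with `P(λᵢ, ρ_{σ(i)}) ≠ a` for all `i`. -/
theorem exists_perm_avoiding_value {n : ℕ} (lam rho : Fin n → ℂ) (a : ℂ)
    (P : ℂ → ℂ → ℂ)
    (hinj₁ : ∀ l r, P l r = a → ∀ r', r' ≠ r → P l r' ≠ a)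
    (hinj₂ : ∀ l r, P l r = a → ∀ l', l' ≠ l → P l' r ≠ a)
    (hmult : ∀ l r, P l r = a →
      (Finset.univ.filter fun i => lam i = l).card +
        (Finset.univ.filter fun j => rho j = r).card ≤ n) :
    ∃ σ : Equiv.Perm (Fin n), ∀ i, P (lam i) (rho (σ i)) ≠ a := by
  classical
  set t : Fin n → Finset (Fin n) :=
    fun i => Finset.univ.filter fun j => P (lam i) (rho j) ≠ a with ht
  have hall : ∀ S : Finset (Fin n), S.card ≤ (S.biUnion t).card := by
    intro S
    rcases S.eq_empty_or_nonempty with rfl | ⟨i₀, hi₀⟩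
    · simp
    set C : Finset (Fin n) :=
      Finset.univ.filter fun j => ∀ i ∈ S, P (lam i) (rho j) = a with hC
    have hsub : Finset.univ \ C ⊆ S.biUnion t := by
      intro j hj
      simp only [hC, Finset.mem_sdiff, Finset.mem_filter, Finset.mem_univ,
        true_and, not_forall] at hj
      obtain ⟨i, hiS, hia⟩ := hj
      exact Finset.mem_biUnion.2 ⟨i, hiS, by simp [ht, hia]⟩
    have key : S.card + C.card ≤ n := by
      rcases C.eq_empty_or_nonempty with hCe | ⟨j₀, hj₀⟩
      · simpa [hCe] using (Finset.card_le_univ S).trans_eq (by simp)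
      · have hj₀' : ∀ i ∈ S, P (lam i) (rho j₀) = a := by
          simpa [hC] using hj₀
        have h0 : P (lam i₀) (rho j₀) = a := hj₀' i₀ hi₀
        have hSsub : S ⊆ Finset.univ.filter fun i => lam i = lam i₀ := by
          intro i hi
          simp only [Finset.mem_filter, Finset.mem_univ, true_and]
          by_contra hne
          exact hinj₂ (lam i₀) (rho j₀) h0 (lam i) hne (hj₀' i hi)
        have hCsub : C ⊆ Finset.univ.filter fun j => rho j = rho j₀ := by
          intro j hj
          simp only [Finset.mem_filter, Finset.mem_univ, true_and]
          have hja : P (lam i₀) (rho j) = a := by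
            simp only [hC, Finset.mem_filter] at hj
            exact hj.2 i₀ hi₀
          by_contra hne
          exact hinj₁ (lam i₀) (rho j₀) h0 (rho j) hne hja
        calc S.card + C.card
            ≤ (Finset.univ.filter fun i => lam i = lam i₀).card +
              (Finset.univ.filter fun j => rho j = rho j₀).card :=
              Nat.add_le_add (Finset.card_le_card hSsub) (Finset.card_le_card hCsub)
          _ ≤ n := hmult _ _ h0
    have hcard : n - C.card ≤ (S.biUnion t).card := by
      calc n - C.card = (Finset.univ : Finset (Fin n)).card - C.card := by simp
        _ ≤ (Finset.univ \ C).card := by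
            rw [Finset.card_sdiff_of_subset (Finset.subset_univ C)]
        _ ≤ (S.biUnion t).card := Finset.card_le_card hsub
    omega
  obtain ⟨f, hfinj, hf⟩ :=
    (Finset.all_card_le_biUnion_card_iff_existsInjective' t).mp hall
  refine ⟨Equiv.ofBijective f (Finite.injective_iff_bijective.mp hfinj), ?_⟩
  intro i
  have := hf i
  simpa [ht] using this
end
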